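/- Let ψ : Q → R be a nonzero homomorphism of spaces of quantities (Q free of zero divisors) with induced group homomorphism φ : 𝒟_Q → 𝒟_R. Then the projection of the kernel K = ψ⁻¹(1_R) to the group of dimensions equals the kernel of φ: dim_Q(K) = ker φ. -/
import Mathlib


/-- A space of quantities over a field `F` with group of dimensions `D`
(a finitely generated free abelian group): a set `Q` with a surjective
projection `dim : Q → D`, an abelian monoid product for which `dim` is a
monoid homomorphism, and on each fiber a one-dimensional `F`-vector space
structure (addition `add` and scalar multiplication `smul`, with `zero A`
the zero of the fiber over `A`), with the product distributing over
fiberwise addition and associating with scalar multiplication. -/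
structure QuantitySpace (F : Type*) [Field F] (D : Type*) [CommGroup D]
    [Module.Free ℤ (Additive D)] [Module.Finite ℤ (Additive D)]
    (Q : Type*) where
  dim : Q → D
  dim_surj : Function.Surjective dim
  mul : Q → Q → Q
  one : Q
  mul_comm : ∀ q r, mul q r = mul r q
  mul_assoc : ∀ q r s, mul (mul q r) s = mul q (mul r s)
  one_mul : ∀ q, mul one q = q
  dim_mul : ∀ q r, dim (mul q r) = dim q * dim r
  dim_one : dim one = 1
  add : Q → Q → Q
  smul : F → Q → Q
  zero : D → Q
  dim_zero : ∀ A, dim (zero A) = A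
  dim_add : ∀ q r, dim q = dim r → dim (add q r) = dim q
  dim_smul : ∀ (α : F) q, dim (smul α q) = dim q
  add_comm : ∀ q r, dim q = dim r → add q r = add r q
  add_assoc : ∀ q r s, dim q = dim r → dim r = dim s →
    add (add q r) s = add q (add r s)
  zero_add : ∀ q, add (zero (dim q)) q = q
  add_neg : ∀ q, add q (smul (-1) q) = zero (dim q)
  one_smul : ∀ q, smul 1 q = q
  mul_smul : ∀ (α β : F) q, smul (α * β) q = smul α (smul β q)
  smul_add : ∀ (α : F) q r, dim q = dim r →
    smul α (add q r) = add (smul α q) (smul α r)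
  add_smul : ∀ (α β : F) q, smul (α + β) q = add (smul α q) (smul β q)
  /-- each fiber contains a nonzero vector -/
  exists_nonzero : ∀ A : D, ∃ q, dim q = A ∧ q ≠ zero A
  /-- each fiber is one-dimensional: a nonzero vector spans it -/
  fiber_gen : ∀ q r, dim q = dim r → q ≠ zero (dim q) → ∃ α : F, r = smul α q
  /-- and a nonzero vector is free -/
  smul_injective : ∀ (α β : F) q, q ≠ zero (dim q) → smul α q = smul β q → α = β
  mul_add : ∀ q r s, dim r = dim s → mul q (add r s) = add (mul q r) (mul q s)
  smul_mul : ∀ (α : F) q r, mul (smul α q) r = smul α (mul q r)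

namespace QuantitySpace

variable {F : Type*} [Field F] {D D' : Type*} [CommGroup D] [CommGroup D']
  [Module.Free ℤ (Additive D)] [Module.Finite ℤ (Additive D)]
  [Module.Free ℤ (Additive D')] [Module.Finite ℤ (Additive D')]
  {Q R : Type*}

/-- `q` is a zero element, i.e. the zero of its fiber. -/
def IsZero (S : QuantitySpace F D Q) (q : Q) : Prop := q = S.zero (S.dim q)

/-- The space has no zero divisors: a product of nonzero quantities is nonzero. -/
def NoZeroDiv (S : QuantitySpace F D Q) : Prop :=
  ∀ q r, ¬ S.IsZero q → ¬ S.IsZero r → ¬ S.IsZero (S.mul q r)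

/-- A section of the space: `dim ∘ σ = id`. -/
def IsSection (S : QuantitySpace F D Q) (σ : D → Q) : Prop :=
  ∀ A, S.dim (σ A) = A

/-- A system of units: a nonzero section. -/
def IsNonzeroSection (S : QuantitySpace F D Q) (σ : D → Q) : Prop :=
  S.IsSection σ ∧ ∀ A, ¬ S.IsZero (σ A)

/-- A coherent section: a group homomorphism. -/
def IsCoherent (S : QuantitySpace F D Q) (σ : D → Q) : Prop :=
  σ 1 = S.one ∧ ∀ A B, σ (A * B) = S.mul (σ A) (σ B)

/-- `T` is a subspace: with the operations of `Q` restricted to `T` and the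
restricted projection, `T` is itself a space of quantities (closed under the
operations, contains the identity, the zeros and a nonzero element of each of
its fibers, and its set of dimensions is closed under inverses, so that it is
a subgroup). -/
def IsSubspace (S : QuantitySpace F D Q) (T : Set Q) : Prop :=
  S.one ∈ T ∧
  (∀ q ∈ T, ∀ r ∈ T, S.mul q r ∈ T) ∧
  (∀ q ∈ T, ∀ r ∈ T, S.dim q = S.dim r → S.add q r ∈ T) ∧
  (∀ (α : F), ∀ q ∈ T, S.smul α q ∈ T) ∧
  (∀ q ∈ T, S.zero (S.dim q) ∈ T) ∧
  (∀ q ∈ T, ∃ r ∈ T, S.dim r = S.dim q ∧ r ≠ S.zero (S.dim q)) ∧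
  (∀ q ∈ T, ∃ r ∈ T, S.dim r = (S.dim q)⁻¹)

/-- A homomorphism of spaces of quantities: multiplicative, fiber-preserving,
and `F`-linear on each fiber. -/
def IsHom (S : QuantitySpace F D Q) (T : QuantitySpace F D' R) (ψ : Q → R) : Prop :=
  (∀ q r, ψ (S.mul q r) = T.mul (ψ q) (ψ r)) ∧
  (∀ q₁ q₂, S.dim q₁ = S.dim q₂ → T.dim (ψ q₁) = T.dim (ψ q₂)) ∧
  (∀ (α β : F) (q₁ q₂ : Q), S.dim q₁ = S.dim q₂ →
    ψ (S.add (S.smul α q₁) (S.smul β q₂)) = T.add (T.smul α (ψ q₁)) (T.smul β (ψ q₂)))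

end QuantitySpace

variable {F : Type*} [Field F] {D D' : Type*} [CommGroup D] [CommGroup D']
  [Module.Free ℤ (Additive D)] [Module.Finite ℤ (Additive D)]
  [Module.Free ℤ (Additive D')] [Module.Finite ℤ (Additive D')]
  {Q R : Type*}
open QuantitySpace


section Aux

variable {F : Type*} [Field F] {D D' : Type*} [CommGroup D] [CommGroup D']
  [Module.Free ℤ (Additive D)] [Module.Finite ℤ (Additive D)]
  [Module.Free ℤ (Additive D')] [Module.Finite ℤ (Additive D')]
  {Q R : Type*}
open QuantitySpace

lemma QS.smul_zero (S : QuantitySpace F D Q) (q : Q) :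
    S.smul 0 q = S.zero (S.dim q) := by
  have h := S.add_smul 1 (-1) q
  have h1 : (1 : F) + (-1) = 0 := by ring
  rw [h1, S.one_smul] at h
  rw [h, S.add_neg]

lemma QS.add_zero (S : QuantitySpace F D Q) (q : Q) :
    S.add q (S.zero (S.dim q)) = q := by
  have hd : S.dim q = S.dim (S.zero (S.dim q)) := (S.dim_zero _).symm
  rw [S.add_comm q _ hd, S.zero_add]

lemma QS.zero_mul (S : QuantitySpace F D Q) (A : D) (r : Q) :
    S.mul (S.zero A) r = S.zero (A * S.dim r) := by
  obtain ⟨q0, hq0⟩ := S.dim_surj A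
  have h0 : S.zero A = S.smul 0 q0 := by rw [QS.smul_zero, hq0]
  rw [h0, S.smul_mul, QS.smul_zero, S.dim_mul, hq0]

lemma QS.smul_ne_zero (S : QuantitySpace F D Q) {α : F} {q : Q}
    (hα : α ≠ 0) (hq : ¬ S.IsZero q) : ¬ S.IsZero (S.smul α q) := by
  intro h
  unfold IsZero at h
  rw [S.dim_smul] at h
  rw [← QS.smul_zero] at h
  exact hα (S.smul_injective α 0 q (fun hz => hq hz) h)

lemma QS.one_ne_zero (S : QuantitySpace F D Q) : ¬ S.IsZero S.one := by
  intro h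
  obtain ⟨q, hq, hqne⟩ := S.exists_nonzero (1 : D)
  unfold IsZero at h
  rw [S.dim_one] at h
  have : q = S.zero 1 := by
    conv_lhs => rw [← S.one_mul q]
    rw [h, QS.zero_mul, hq, _root_.one_mul]
  exact hqne this

lemma QS.psi_smul {S : QuantitySpace F D Q} {T : QuantitySpace F D' R}
    {ψ : Q → R} (hψ : IsHom S T ψ) (α : F) (q : Q) :
    ψ (S.smul α q) = T.smul α (ψ q) := by
  have h := hψ.2.2 α 0 q q rfl
  rw [QS.smul_zero S q] at h
  have h1 : S.zero (S.dim q) = S.zero (S.dim (S.smul α q)) := by rw [S.dim_smul]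
  rw [h1, QS.add_zero] at h
  rw [QS.smul_zero T (ψ q)] at h
  have h2 : T.zero (T.dim (ψ q)) = T.zero (T.dim (T.smul α (ψ q))) := by rw [T.dim_smul]
  rw [h2, QS.add_zero] at h
  exact h

lemma QS.psi_one_ne {S : QuantitySpace F D Q} {T : QuantitySpace F D' R}
    {ψ : Q → R} (hψ : IsHom S T ψ) (hnz : ∃ q : Q, ¬ T.IsZero (ψ q)) :
    ¬ T.IsZero (ψ S.one) := by
  intro h
  obtain ⟨p, hp⟩ := hnz
  apply hp
  unfold IsZero at h ⊢
  have heq : ψ p = T.mul (ψ S.one) (ψ p) := by rw [← hψ.1, S.one_mul]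
  have heq2 : ψ p = T.zero (T.dim (ψ S.one) * T.dim (ψ p)) := by
    conv_lhs => rw [heq, h]
    rw [QS.zero_mul]
  have hd : T.dim (ψ p) = T.dim (ψ S.one) * T.dim (ψ p) := by
    conv_lhs => rw [heq2]
    rw [T.dim_zero]
  rw [hd]
  exact heq2

lemma QS.psi_ne_zero {S : QuantitySpace F D Q} {T : QuantitySpace F D' R}
    {ψ : Q → R} (hψ : IsHom S T ψ) (hnz : ∃ q : Q, ¬ T.IsZero (ψ q))
    (hS : S.NoZeroDiv) {q : Q} (hq : ¬ S.IsZero q) : ¬ T.IsZero (ψ q) := by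
  obtain ⟨r, hr, hrne⟩ := S.exists_nonzero (S.dim q)⁻¹
  have hrnz : ¬ S.IsZero r := by unfold IsZero; rw [hr]; exact hrne
  have hmulnz : ¬ S.IsZero (S.mul q r) := hS q r hq hrnz
  have hdim : S.dim S.one = S.dim (S.mul q r) := by
    rw [S.dim_one, S.dim_mul, hr, mul_inv_cancel]
  obtain ⟨α, hα⟩ := S.fiber_gen S.one (S.mul q r) hdim
    (by rw [S.dim_one]; intro h; exact QS.one_ne_zero S (by unfold IsZero; rw [S.dim_one]; exact h))
  have hαne : α ≠ 0 := by
    intro h0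
    apply hmulnz
    unfold IsZero
    rw [hα, h0, QS.smul_zero, S.dim_zero]
  intro hz
  have h1 : ψ (S.mul q r) = T.smul α (ψ S.one) := by rw [hα, QS.psi_smul hψ]
  have h2 : T.IsZero (ψ (S.mul q r)) := by
    unfold IsZero at hz ⊢
    rw [hψ.1, hz, QS.zero_mul, T.dim_zero]
  rw [h1] at h2
  exact QS.smul_ne_zero T hαne (QS.psi_one_ne hψ hnz) h2

end Aux

theorem kernel_projects_to_kernel (S : QuantitySpace F D Q) (T : QuantitySpace F D' R)
    (ψ : Q → R) (hψ : IsHom S T ψ) (hnz : ∃ q : Q, ¬ T.IsZero (ψ q))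
    (hS : S.NoZeroDiv) (φ : D →* D') (hφ : ∀ q : Q, T.dim (ψ q) = φ (S.dim q)) :
    S.dim '' {q : Q | ψ q = T.one} = (φ.ker : Set D) := by
  ext A
  simp only [Set.mem_image, Set.mem_setOf_eq, SetLike.mem_coe, MonoidHom.mem_ker]
  constructor
  · rintro ⟨q, hq, rfl⟩
    rw [← hφ, hq, T.dim_one]
  · intro hA
    obtain ⟨q0, hq0, hq0ne⟩ := S.exists_nonzero A
    have hq0nz : ¬ S.IsZero q0 := by unfold IsZero; rw [hq0]; exact hq0ne
    have hψq0 : ¬ T.IsZero (ψ q0) := QS.psi_ne_zero hψ hnz hS hq0nz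
    have hdim : T.dim (ψ q0) = T.dim T.one := by
      rw [hφ, hq0, hA, T.dim_one]
    obtain ⟨α, hα⟩ := T.fiber_gen (ψ q0) T.one hdim (fun h => hψq0 h)
    refine ⟨S.smul α q0, ?_, by rw [S.dim_smul, hq0]⟩
    rw [QS.psi_smul hψ, ← hα]
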